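/- If three leaves x, y, z of a phylogenetic network N are each reachable from the root by a unique directed path (in particular, none is reachable from any recombination vertex), then exactly one of the triplets xy|z, xz|y, yz|x is consistent with N. -/

import Mathlib

/-!
Compare the unique root paths `Px`, `Py`, `Pz` to the three leaves by the lengths of their
pairwise common prefixes. By uniqueness, the root path to a vertex lying on two of them is a
prefix of both, so the two paths share no vertex after their common prefix. These lengths satisfy
the ultrametric inequality and are not all equal, since otherwise the last common vertex would
have three distinct children. Hence, up to renaming, the prefixes `Px, Pz` and `Py, Pz` have the
same length, shorter than that of `Px, Py`. Cutting the paths at the two branch vertices gives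
the four internally disjoint paths witnessing `xy|z`, while for a witness `u, v` of `xz|y` the
path from `v` to `y` would run through the successor of `u` on the path from `u` to `x`.
-/

namespace Phylo

variable {V : Type*}

/-- In-degree of a vertex in a directed graph given by relation `R`. -/
noncomputable def inDeg (R : V → V → Prop) (v : V) : ℕ := {u | R u v}.ncard

/-- Out-degree of a vertex. -/
noncomputable def outDeg (R : V → V → Prop) (v : V) : ℕ := {w | R v w}.ncard

/-- A phylogenetic network: an acyclic digraph with a unique root of indegree 0 and
outdegree 2, in which every vertex is the root, a split vertex (indeg 1, outdeg 2),
a recombination vertex (indeg 2, outdeg 1) or a leaf (indeg 1, outdeg 0). -/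
def IsPhyloNet (R : V → V → Prop) : Prop :=
  (∀ v, ¬ Relation.TransGen R v v) ∧
  (∃! r, inDeg R r = 0) ∧
  (∀ v : V, (inDeg R v = 0 ∧ outDeg R v = 2) ∨ (inDeg R v = 1 ∧ outDeg R v = 2) ∨
    (inDeg R v = 2 ∧ outDeg R v = 1) ∨ (inDeg R v = 1 ∧ outDeg R v = 0))

/-- A leaf is a vertex of outdegree 0. -/
def IsLf (R : V → V → Prop) (v : V) : Prop := outDeg R v = 0

/-- The set of leaves of a network. -/
def netLeaves (R : V → V → Prop) : Set V := {v | IsLf R v}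

/-- `p` is a directed path (as a nonempty list of vertices) from `a` to `b`. -/
def IsPth (R : V → V → Prop) (p : List V) (a b : V) : Prop :=
  p ≠ [] ∧ p.head? = some a ∧ p.getLast? = some b ∧ p.Chain' R

/-- Internal vertices of a path. -/
def interior (p : List V) : List V := p.tail.dropLast

/-- Two paths are internally vertex-disjoint. -/
def IntDisj (p q : List V) : Prop :=
  (∀ v ∈ interior p, v ∉ q) ∧ (∀ v ∈ interior q, v ∉ p)

/-- The triplet xy|z is consistent with the network `R`: there are `u ≠ v` and pairwise
internally vertex-disjoint paths `u→x`, `u→y`, `v→u`, `v→z`. -/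
def ConsistentTrip (R : V → V → Prop) (x y z : V) : Prop :=
  ∃ u v : V, ∃ p1 p2 p3 p4 : List V, u ≠ v ∧
    IsPth R p1 u x ∧ IsPth R p2 u y ∧ IsPth R p3 v u ∧ IsPth R p4 v z ∧
    IntDisj p1 p2 ∧ IntDisj p1 p3 ∧ IntDisj p1 p4 ∧
    IntDisj p2 p3 ∧ IntDisj p2 p4 ∧ IntDisj p3 p4

/-- `(x,y,z) ∈ T` codes the rooted triplet xy|z; `trip T x y z` says xy|z ∈ T
(taking into account the symmetry xy|z = yx|z). -/
def trip (T : Set (V × V × V)) (x y z : V) : Prop := (x, y, z) ∈ T ∨ (y, x, z) ∈ T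

/-- The leaf set L(T) of a triplet set. -/
def tripLeaves (T : Set (V × V × V)) : Set V :=
  {a | ∃ t ∈ T, a = t.1 ∨ a = t.2.1 ∨ a = t.2.2}

/-- `T` is dense: every 3-element subset of L(T) supports at least one triplet of `T`. -/
def DenseT (T : Set (V × V × V)) : Prop :=
  ∀ x y z, x ∈ tripLeaves T → y ∈ tripLeaves T → z ∈ tripLeaves T →
    x ≠ y → x ≠ z → y ≠ z → trip T x y z ∨ trip T x z y ∨ trip T y z x

/-- An SN-set of `T`: a subset of L(T) closed under the operation
`S_T(X) = X ∪ {c | ∃ x y ∈ X, xc|y ∈ T}`. -/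
def IsSNSet (T : Set (V × V × V)) (Y : Set V) : Prop :=
  Y ⊆ tripLeaves T ∧
    ∀ ⦃c x y : V⦄, x ∈ Y → y ∈ Y → c ∈ tripLeaves T → trip T x c y → c ∈ Y

/-- `SN T X`: the closure of `X` under `S_T`, i.e. the smallest SN-superset of `X`. -/
def SN (T : Set (V × V × V)) (X : Set V) : Set V := ⋂₀ {Y | X ⊆ Y ∧ IsSNSet T Y}

/-- A maximal SN-set: a proper SN-set such that the only SN-set strictly containing
it is L(T) itself. -/
def MaxSN (T : Set (V × V × V)) (S : Set V) : Prop :=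
  IsSNSet T S ∧ S ≠ tripLeaves T ∧ ∀ Y, IsSNSet T Y → S ⊂ Y → Y = tripLeaves T

/-- A network is consistent with a triplet set if it is consistent with every triplet. -/
def ConsistentSet (R : V → V → Prop) (T : Set (V × V × V)) : Prop :=
  ∀ t ∈ T, ConsistentTrip R t.1 t.2.1 t.2.2

/-- A cut-arc: an arc whose removal disconnects the underlying undirected graph. -/
def CutArc (R : V → V → Prop) (u v : V) : Prop :=
  R u v ∧ ∃ a b : V, ¬ Relation.ReflTransGen
    (fun p q => (R p q ∨ R q p) ∧ ¬((p = u ∧ q = v) ∨ (p = v ∧ q = u))) a b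

/-- The set of leaves below the arc `(u,v)`: leaves reachable from `v`. -/
def leavesBelow (R : V → V → Prop) (u v : V) : Set V :=
  {ℓ | IsLf R ℓ ∧ Relation.ReflTransGen R v ℓ}

/-- A highest cut-arc: a cut-arc `(u,v)` such that there is no cut-arc `(u',v')`
with `u` reachable from `v'`. -/
def HighestCutArc (R : V → V → Prop) (u v : V) : Prop :=
  CutArc R u v ∧ ∀ u' v', CutArc R u' v' → ¬ Relation.ReflTransGen R v' u

/-- The subset `S` is connected in the underlying undirected graph. -/
def ConnOn (R : V → V → Prop) (S : Set V) : Prop :=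
  ∀ a ∈ S, ∀ b ∈ S,
    Relation.ReflTransGen (fun p q => p ∈ S ∧ q ∈ S ∧ (R p q ∨ R q p)) a b

/-- `S` induces a biconnected subgraph containing at least one arc. -/
def BiconnSet (R : V → V → Prop) (S : Set V) : Prop :=
  (∃ a ∈ S, ∃ b ∈ S, R a b) ∧ ConnOn R S ∧ ∀ w ∈ S, ConnOn R (S \ {w})

/-- A biconnected component: a maximal biconnected vertex set. -/
def IsBCC (R : V → V → Prop) (S : Set V) : Prop :=
  BiconnSet R S ∧ ∀ S', BiconnSet R S' → S ⊆ S' → S' = S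

/-- A level-k network: every biconnected component has at most `k` recombination
vertices. -/
def LevelK (k : ℕ) (R : V → V → Prop) : Prop :=
  ∀ S, IsBCC R S → ({v ∈ S | inDeg R v = 2}).ncard ≤ k

/-- A valid (non-redundant) network: every nontrivial biconnected component has at
least three outgoing arcs. -/
def GoodNet (R : V → V → Prop) : Prop :=
  IsPhyloNet R ∧ ∀ S, IsBCC R S → 3 ≤ S.ncard →
    3 ≤ {p : V × V | R p.1 p.2 ∧ p.1 ∈ S ∧ p.2 ∉ S}.ncard

end Phylo

namespace Phylo

variable {V : Type*} {R : V → V → Prop}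

def IsUniquePth (R : V → V → Prop) (p : List V) (a b : V) : Prop :=
  IsPth R p a b ∧ ∀ q, IsPth R q a b → q = p

namespace IsPth

variable {p q : List V} {a b c : V}

theorem eq_cons_tail (hp : IsPth R p a b) : p = a :: p.tail := by
  obtain ⟨hne, hh, -, -⟩ := hp
  cases p with
  | nil => exact absurd rfl hne
  | cons d t => simp_all

theorem getLast_mem (hp : IsPth R p a b) : b ∈ p := List.mem_of_getLast? hp.2.2.1

theorem append (hp : IsPth R p a b) (hq : IsPth R q b c) : IsPth R (p ++ q.tail) a c := by
  obtain ⟨hpne, hph, hpl, hpc⟩ := hp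
  have hq' := hq.eq_cons_tail
  obtain ⟨-, -, hql, hqc⟩ := hq
  refine ⟨by simp [hpne], by rw [List.head?_append, hph]; rfl, ?_, ?_⟩
  · rcases eq_or_ne q.tail [] with ht | ht
    · rw [hq', ht] at hql
      simpa [ht, ← Option.some_inj.mp hql] using hpl
    · rw [hq', List.getLast?_cons, List.getLast?_eq_some_getLast ht] at hql
      rw [List.getLast?_append_of_ne_nil _ ht, List.getLast?_eq_some_getLast ht]
      simpa using hql
  · show List.IsChain R _
    rw [List.isChain_append]
    refine ⟨hpc, hqc.tail, ?_⟩
    rw [hq'] at hqc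
    rintro u hu v hv
    obtain rfl : u = b := by simpa [hpl] using hu.symm
    exact (List.isChain_cons.mp hqc).1 v hv

theorem drop (hp : IsPth R p a b) {n : ℕ} (hn : n < p.length) : IsPth R (p.drop n) p[n] b := by
  obtain ⟨-, -, hl, hc⟩ := hp
  have hne : p.drop n ≠ [] := by simpa using hn
  refine ⟨hne, by simp, ?_, hc.suffix (List.drop_suffix n p)⟩
  rw [← hl, ← List.take_append_drop n p, List.getLast?_append_of_ne_nil _ hne,
    List.take_append_drop]

theorem take (hp : IsPth R p a b) {n : ℕ} (hn : n < p.length) :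
    IsPth R (p.take (n + 1)) a p[n] := by
  obtain ⟨-, hh, -, hc⟩ := hp
  refine ⟨by simp [List.ne_nil_of_length_pos (by omega : 0 < p.length)], ?_, ?_,
    hc.prefix (List.take_prefix _ p)⟩
  · rwa [List.head?_take, if_neg (by omega)]
  · rw [← List.take_concat_get hn, List.concat_eq_append, List.getLast?_concat]

theorem suffix_cons {s t : List V} {w : V} (hp : IsPth R p a b) (hst : p = s ++ w :: t) :
    IsPth R (w :: t) w b := by
  subst hst
  simpa using hp.drop (n := s.length) (by simp)

theorem rel_getElem (hp : IsPth R p a b) {n : ℕ} (hn : n + 1 < p.length) : R p[n] p[n + 1] :=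
  List.isChain_iff_getElem.mp hp.2.2.2 n hn

theorem nodup (hR : ∀ v, ¬ Relation.TransGen R v v) (hp : IsPth R p a b) : p.Nodup := by
  have : p.Pairwise (Relation.TransGen R) :=
    List.isChain_iff_pairwise.mp (hp.2.2.2.imp fun _ _ => Relation.TransGen.single)
  exact this.imp fun {u _} h => by rintro rfl; exact hR u h

theorem eq_of_mem_of_isLf [Finite V] {x : V} (hp : IsPth R p a b) (hx : IsLf R x)
    (hxp : x ∈ p) : x = b := by
  obtain ⟨s, t, hst⟩ := List.append_of_mem hxp
  have hxt := hp.suffix_cons hst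
  cases t with
  | nil => simpa using hxt.2.2.1
  | cons d t =>
    have hxd : d ∈ {w | R x w} := (List.isChain_cons_cons.mp hxt.2.2.2).1
    rw [IsLf, outDeg, Set.ncard_eq_zero (Set.toFinite _)] at hx
    simp [hx] at hxd

end IsPth

theorem IsUniquePth.prefix_of_mem {P e : List V} {r x w : V} (hP : IsUniquePth R P r x)
    (hw : w ∈ P) (he : IsPth R e r w) : e <+: P := by
  obtain ⟨s, t, hst⟩ := List.append_of_mem hw
  exact ⟨t, hP.2 _ (he.append (hP.1.suffix_cons hst))⟩

theorem exists_isPth_of_inDeg_eq_zero [Finite V] {r : V} (hnet : IsPhyloNet R)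
    (hr : inDeg R r = 0) (v : V) : ∃ p, IsPth R p r v := by
  have : Std.Irrefl (Relation.TransGen R) := ⟨hnet.1⟩
  induction v using (Finite.wellFounded_of_trans_of_irrefl (Relation.TransGen R)).induction with
  | _ v ih =>
    rcases eq_or_ne (inDeg R v) 0 with h0 | h0
    · obtain rfl : v = r := hnet.2.1.unique h0 hr
      exact ⟨[v], by simp, rfl, rfl, List.isChain_singleton v⟩
    · obtain ⟨u, hu⟩ : {u | R u v}.Nonempty := Set.nonempty_of_ncard_ne_zero h0
      obtain ⟨p, hp⟩ := ih u (Relation.TransGen.single hu)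
      exact ⟨p ++ [v], hp.append ⟨by simp, rfl, rfl, List.isChain_pair.mpr hu⟩⟩

theorem exists_isUniquePth_of_inDeg_eq_zero [Finite V] {r x : V} (hnet : IsPhyloNet R)
    (hr : inDeg R r = 0) (hux : ∀ p q : List V, IsPth R p r x → IsPth R q r x → p = q) :
    ∃ P, IsUniquePth R P r x :=
  have ⟨P, hP⟩ := exists_isPth_of_inDeg_eq_zero hnet hr x
  ⟨P, hP, fun q hq => hux q P hq hP⟩

theorem outDeg_le_two (hnet : IsPhyloNet R) (v : V) : outDeg R v ≤ 2 := by
  rcases hnet.2.2 v with h | h | h | h <;> omega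

theorem three_le_outDeg [Finite V] {v a b c : V} (ha : R v a) (hb : R v b) (hc : R v c)
    (hab : a ≠ b) (hac : a ≠ c) (hbc : b ≠ c) : 3 ≤ outDeg R v := by
  rw [outDeg, ← Set.ncard_eq_three.mpr ⟨a, b, c, hab, hac, hbc, rfl⟩]
  exact Set.ncard_le_ncard (by simp [Set.insert_subset_iff, ha, hb, hc]) (Set.toFinite _)

theorem interior_subset_tail (l : List V) : interior l ⊆ l.tail :=
  (List.dropLast_sublist _).subset

theorem interior_subset_dropLast (l : List V) : interior l ⊆ l.dropLast := by
  rw [interior, ← List.tail_dropLast]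
  exact List.tail_subset _

theorem interior_drop_subset (l : List V) (n : ℕ) : interior (l.drop n) ⊆ l.drop (n + 1) :=
  List.tail_drop ▸ interior_subset_tail _

theorem interior_drop_take_subset_take {l : List V} {n : ℕ} (hn : n < l.length) (j : ℕ) :
    interior ((l.take (n + 1)).drop j) ⊆ l.take n := by
  refine List.Subset.trans (interior_subset_dropLast _) ?_
  rw [List.dropLast_drop_eq_drop_dropLast, ← List.take_concat_get hn, List.concat_eq_append,
    List.dropLast_concat]
  exact List.drop_subset _ _

theorem interior_drop_take_subset_drop (l : List V) (n j : ℕ) :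
    interior ((l.take (n + 1)).drop j) ⊆ l.drop (j + 1) := by
  refine List.Subset.trans (interior_drop_subset _ j) ?_
  rw [List.drop_take]
  exact List.take_subset _ _

theorem intDisj_drop_drop_take {l : List V} (hl : l.Nodup) {k : ℕ} (hk : k < l.length) (m : ℕ) :
    IntDisj (l.drop k) ((l.take (k + 1)).drop m) :=
  ⟨fun _ hw hw' => List.disjoint_take_drop hl le_rfl (List.drop_subset _ _ hw')
      (interior_drop_subset l k hw),
    fun _ hw hw' => List.disjoint_take_drop hl le_rfl (interior_drop_take_subset_take hk m hw) hw'⟩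

theorem consistentTrip_swap {x y z : V} (h : ConsistentTrip R x y z) : ConsistentTrip R y x z :=
  have ⟨u, v, p1, p2, p3, p4, huv, h1, h2, h3, h4, d12, d13, d14, d23, d24, d34⟩ := h
  ⟨u, v, p2, p1, p3, p4, huv, h2, h1, h3, h4, ⟨d12.2, d12.1⟩, d23, d24, d13, d14, d34⟩

theorem consistentTrip_comm {x y z : V} : ConsistentTrip R x y z ↔ ConsistentTrip R y x z :=
  ⟨consistentTrip_swap, consistentTrip_swap⟩

section CommonPrefix

open Classical in
noncomputable def commonPrefixLength (p q : List V) : ℕ :=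
  Nat.findGreatest (fun n => p.take n = q.take n) (min p.length q.length)

open Classical in
theorem take_commonPrefixLength (p q : List V) :
    p.take (commonPrefixLength p q) = q.take (commonPrefixLength p q) :=
  Nat.findGreatest_spec (P := fun n => p.take n = q.take n) (Nat.zero_le _) rfl

open Classical in
theorem commonPrefixLength_le_min (p q : List V) :
    commonPrefixLength p q ≤ min p.length q.length :=
  Nat.findGreatest_le _

open Classical in
theorem le_commonPrefixLength {p q : List V} {n : ℕ} (hp : n ≤ p.length) (hq : n ≤ q.length)
    (h : p.take n = q.take n) : n ≤ commonPrefixLength p q :=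
  Nat.le_findGreatest (le_min hp hq) h

theorem commonPrefixLength_comm (p q : List V) :
    commonPrefixLength p q = commonPrefixLength q p := by
  have key (p q : List V) : commonPrefixLength p q ≤ commonPrefixLength q p := by
    have := commonPrefixLength_le_min p q
    exact le_commonPrefixLength (by omega) (by omega) (take_commonPrefixLength p q).symm
  exact (key p q).antisymm (key q p)

theorem take_eq_of_le_commonPrefixLength {p q : List V} {n : ℕ}
    (hn : n ≤ commonPrefixLength p q) : p.take n = q.take n := by
  have h := congrArg (List.take n) (take_commonPrefixLength p q)
  rwa [List.take_take, List.take_take, min_eq_left hn] at h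

theorem getElem_eq_of_lt_commonPrefixLength {p q : List V} {n : ℕ}
    (hn : n < commonPrefixLength p q) (hp : n < p.length) (hq : n < q.length) :
    p[n] = q[n] := by
  have h := congrArg (·[n]?) (take_eq_of_le_commonPrefixLength hn)
  simpa [List.getElem?_take, hp, hq] using h

theorem getElem_ne_of_commonPrefixLength_eq {p q : List V} {n : ℕ}
    (hn : commonPrefixLength p q = n) (hp : n < p.length) (hq : n < q.length) :
    p[n] ≠ q[n] := by
  intro he
  have : n + 1 ≤ commonPrefixLength p q := le_commonPrefixLength hp hq (by
    rw [← List.take_concat_get hp, ← List.take_concat_get hq, he,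
      take_eq_of_le_commonPrefixLength hn.ge])
  omega

theorem min_le_commonPrefixLength (p q s : List V) :
    min (commonPrefixLength p q) (commonPrefixLength q s) ≤ commonPrefixLength p s := by
  have hpq := commonPrefixLength_le_min p q
  have hqs := commonPrefixLength_le_min q s
  refine le_commonPrefixLength (by omega) (by omega) ?_
  rw [take_eq_of_le_commonPrefixLength (min_le_left _ _),
    take_eq_of_le_commonPrefixLength (min_le_right _ _)]

theorem length_le_commonPrefixLength_append (s t t' : List V) :
    s.length ≤ commonPrefixLength (s ++ t) (s ++ t') :=
  le_commonPrefixLength (by simp) (by simp) (by simp)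

theorem one_le_commonPrefixLength {p q : List V} {r a b : V} (hp : IsPth R p r a)
    (hq : IsPth R q r b) : 1 ≤ commonPrefixLength p q := by
  rw [hp.eq_cons_tail, hq.eq_cons_tail]
  exact length_le_commonPrefixLength_append [r] _ _

end CommonPrefix

section UniquePaths

variable [Finite V] {r x y z : V} {Px Py Pz : List V}

theorem commonPrefixLength_lt_length {a b : V} (hxl : IsLf R x) (hxy : x ≠ y)
    (hPx : IsPth R Px a x) (hPy : IsPth R Py b y) : commonPrefixLength Px Py < Px.length := by
  by_contra! h
  have hxPy : x ∈ Py.take (commonPrefixLength Px Py) := by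
    rw [← take_commonPrefixLength, List.take_of_length_le h]
    exact hPx.getLast_mem
  exact hxy (hPy.eq_of_mem_of_isLf hxl (List.take_subset _ _ hxPy))

theorem commonPrefixLength_ne_of_eq (hnet : IsPhyloNet R) (hxl : IsLf R x) (hyl : IsLf R y)
    (hzl : IsLf R z) (hxy : x ≠ y) (hxz : x ≠ z)
    (hPx : IsPth R Px r x) (hPy : IsPth R Py r y) (hPz : IsPth R Pz r z)
    (h : commonPrefixLength Px Py = commonPrefixLength Px Pz) :
    commonPrefixLength Px Pz ≠ commonPrefixLength Py Pz := by
  intro h'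
  obtain ⟨n, hn⟩ : ∃ n, commonPrefixLength Px Py = n + 1 :=
    Nat.exists_eq_add_one.mpr (one_le_commonPrefixLength hPx hPy)
  have hx := commonPrefixLength_lt_length hxl hxy hPx hPy
  have hy := commonPrefixLength_lt_length hyl hxy.symm hPy hPx
  have hz := commonPrefixLength_lt_length hzl hxz.symm hPz hPx
  rw [commonPrefixLength_comm] at hy hz
  have hx' : n + 1 < Px.length := by omega
  have hy' : n + 1 < Py.length := by omega
  have hz' : n + 1 < Pz.length := by omega
  have hxy₀ : Px[n] = Py[n] := getElem_eq_of_lt_commonPrefixLength (by omega) _ _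
  have hxz₀ : Px[n] = Pz[n] := getElem_eq_of_lt_commonPrefixLength (by omega) _ _
  have := three_le_outDeg (hPx.rel_getElem hx') (hxy₀ ▸ hPy.rel_getElem hy')
    (hxz₀ ▸ hPz.rel_getElem hz') (getElem_ne_of_commonPrefixLength_eq hn hx' hy')
    (getElem_ne_of_commonPrefixLength_eq (by omega) hx' hz')
    (getElem_ne_of_commonPrefixLength_eq (by omega) hy' hz')
  have := outDeg_le_two hnet Px[n]
  omega

variable (hnet : IsPhyloNet R) (hr : inDeg R r = 0)
include hnet hr

theorem mem_take_commonPrefixLength (hx : IsUniquePth R Px r x) (hy : IsUniquePth R Py r y)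
    {w : V} (hwx : w ∈ Px) (hwy : w ∈ Py) : w ∈ Px.take (commonPrefixLength Px Py) := by
  obtain ⟨e, he⟩ := exists_isPth_of_inDeg_eq_zero hnet hr w
  have hex := hx.prefix_of_mem hwx he
  have hey := hy.prefix_of_mem hwy he
  have hle : e.length ≤ commonPrefixLength Px Py := le_commonPrefixLength hex.length_le
    hey.length_le ((List.prefix_iff_eq_take.mp hex).symm.trans (List.prefix_iff_eq_take.mp hey))
  rw [List.prefix_iff_eq_take] at hex
  exact (List.take_prefix_take_left hle).subset (hex ▸ he.getLast_mem)

theorem disjoint_drop_of_commonPrefixLength_le (hx : IsUniquePth R Px r x)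
    (hy : IsUniquePth R Py r y) {n : ℕ} (hn : commonPrefixLength Px Py ≤ n) :
    (Px.drop n).Disjoint Py := fun _ hwd hwy =>
  List.disjoint_take_drop (hx.1.nodup hnet.1) hn
    (mem_take_commonPrefixLength hnet hr hx hy (List.drop_subset _ _ hwd) hwy) hwd

theorem intDisj_of_interior_subset_drop (hx : IsUniquePth R Px r x) (hy : IsUniquePth R Py r y)
    {p q : List V} {m n : ℕ} (hm : commonPrefixLength Px Py ≤ m)
    (hn : commonPrefixLength Px Py ≤ n) (hp : p ⊆ Px) (hpi : interior p ⊆ Px.drop m)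
    (hq : q ⊆ Py) (hqi : interior q ⊆ Py.drop n) : IntDisj p q :=
  ⟨fun _ hw hw' => disjoint_drop_of_commonPrefixLength_le hnet hr hx hy hm (hpi hw) (hq hw'),
    fun _ hw hw' => disjoint_drop_of_commonPrefixLength_le hnet hr hy hx
      (commonPrefixLength_comm Px Py ▸ hn) (hqi hw) (hp hw')⟩

theorem not_consistentTrip_of_commonPrefixLength_lt (hxl : IsLf R x) (hxy : x ≠ y)
    (hx : IsUniquePth R Px r x) (hy : IsUniquePth R Py r y) (hz : IsUniquePth R Pz r z)
    (hlt : commonPrefixLength Px Pz < commonPrefixLength Px Py) : ¬ ConsistentTrip R x z y := by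
  rintro ⟨a, b, p1, p2, p3, p4, -, hp1, hp2, hp3, hp4, -, -, d14, -, -, -⟩
  obtain ⟨e, he⟩ := exists_isPth_of_inDeg_eq_zero hnet hr b
  have hE := he.append hp3
  have hPx := hx.2 _ (hE.append hp1)
  have hPz := hz.2 _ (hE.append hp2)
  have hPy := hy.2 _ (he.append hp4)
  set E := e ++ p3.tail
  have hEk : E.length < commonPrefixLength Px Py := by
    refine lt_of_le_of_lt ?_ hlt
    rw [← hPx, ← hPz]
    exact length_le_commonPrefixLength_append _ _ _
  -- `a` lies within the common prefix of `Px` and `Pz`, so its successor `w` on `Px` is on `Py`.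
  obtain ⟨w, t, hwt⟩ : ∃ w t, p1.tail = w :: t := by
    cases h : p1.tail with
    | nil =>
      have hlen := congrArg List.length hPx
      have := commonPrefixLength_le_min Px Py
      simp only [h, List.append_nil] at hlen
      omega
    | cons w t => exact ⟨w, t, rfl⟩
  have hwPy : w ∈ Py := by
    refine List.take_subset (E.length + 1) _ ?_
    rw [← take_eq_of_le_commonPrefixLength hEk, ← hPx, hwt]
    simp [List.take_append]
  have hwE : w ∉ E := fun hw => List.disjoint_of_nodup_append
    (hPx ▸ hx.1.nodup hnet.1) hw (hwt ▸ List.mem_cons_self)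
  have hwp4 : w ∈ p4 := by
    rw [← hPy, List.mem_append] at hwPy
    exact List.mem_of_mem_tail (hwPy.resolve_left fun hw => hwE (List.mem_append_left _ hw))
  have hwx : w ≠ x := fun h => hxy (hy.1.eq_of_mem_of_isLf hxl (h ▸ hwPy))
  have hwint : w ∈ interior p1 := by
    cases t with
    | nil =>
      have := hp1.2.2.1
      rw [hp1.eq_cons_tail, hwt] at this
      simp at this
      exact absurd this hwx
    | cons d t => simp [interior, hwt]
  exact d14.1 w hwint hwp4

theorem consistentTrip_of_commonPrefixLength_lt
    (hx : IsUniquePth R Px r x) (hy : IsUniquePth R Py r y) (hz : IsUniquePth R Pz r z)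
    (hm : commonPrefixLength Px Pz = commonPrefixLength Py Pz)
    (hlt : commonPrefixLength Px Pz < commonPrefixLength Px Py) : ConsistentTrip R x y z := by
  obtain ⟨m, hm1⟩ : ∃ m, commonPrefixLength Px Pz = m + 1 :=
    Nat.exists_eq_add_one.mpr (one_le_commonPrefixLength hx.1 hz.1)
  obtain ⟨k, hk1⟩ : ∃ k, commonPrefixLength Px Py = k + 1 := Nat.exists_eq_add_one.mpr (by omega)
  have hxy := commonPrefixLength_le_min Px Py
  have hxz := commonPrefixLength_le_min Px Pz
  have hkx : k < Px.length := by omega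
  have hky : k < Py.length := by omega
  have hmx : m < Px.length := by omega
  have hmz : m < Pz.length := by omega
  have hu : Px[k] = Py[k] := getElem_eq_of_lt_commonPrefixLength (by omega) _ _
  have hv : Px[m] = Pz[m] := getElem_eq_of_lt_commonPrefixLength (by omega) _ _
  have hp3 : IsPth R ((Px.take (k + 1)).drop m) Px[m] Px[k] := by
    have := (hx.1.take hkx).drop (n := m) (by simp; omega)
    rwa [List.getElem_take] at this
  have hxy_take : Px.take (k + 1) = Py.take (k + 1) := take_eq_of_le_commonPrefixLength hk1.ge
  -- `Px[k]` and `Px[m]` are the last vertices of `Px` on `Py` and on `Pz`.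
  refine ⟨Px[k], Px[m], Px.drop k, Py.drop k, (Px.take (k + 1)).drop m, Pz.drop m,
    fun h => by simp [(hx.1.nodup hnet.1).getElem_inj_iff] at h; omega, hx.1.drop hkx,
    hu ▸ hy.1.drop hky, hp3, hv ▸ hz.1.drop hmz,
    intDisj_of_interior_subset_drop hnet hr hx hy hk1.le hk1.le (List.drop_subset _ _)
      (interior_drop_subset _ _) (List.drop_subset _ _) (interior_drop_subset _ _),
    intDisj_drop_drop_take (hx.1.nodup hnet.1) hkx m,
    intDisj_of_interior_subset_drop hnet hr hx hz (by omega) hm1.le (List.drop_subset _ _)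
      (interior_drop_subset _ _) (List.drop_subset _ _) (interior_drop_subset _ _),
    hxy_take ▸ intDisj_drop_drop_take (hy.1.nodup hnet.1) hky m,
    intDisj_of_interior_subset_drop hnet hr hy hz (by omega) (by omega) (List.drop_subset _ _)
      (interior_drop_subset _ _) (List.drop_subset _ _) (interior_drop_subset _ _),
    intDisj_of_interior_subset_drop hnet hr hx hz hm1.le hm1.le
      (List.Subset.trans (List.drop_subset _ _) (List.take_subset _ _))
      (interior_drop_take_subset_drop _ _ _) (List.drop_subset _ _) (interior_drop_subset _ _)⟩

theorem consistentTrip_resolved_of_commonPrefixLength_lt (hxl : IsLf R x) (hyl : IsLf R y)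
    (hxy : x ≠ y) (hx : IsUniquePth R Px r x) (hy : IsUniquePth R Py r y)
    (hz : IsUniquePth R Pz r z) (hm : commonPrefixLength Px Pz = commonPrefixLength Py Pz)
    (hlt : commonPrefixLength Px Pz < commonPrefixLength Px Py) :
    ConsistentTrip R x y z ∧ ¬ ConsistentTrip R x z y ∧ ¬ ConsistentTrip R y z x :=
  ⟨consistentTrip_of_commonPrefixLength_lt hnet hr hx hy hz hm hlt,
    not_consistentTrip_of_commonPrefixLength_lt hnet hr hxl hxy hx hy hz hlt,
    not_consistentTrip_of_commonPrefixLength_lt hnet hr hyl hxy.symm hy hx hz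
      (by rw [commonPrefixLength_comm Py Px]; omega)⟩

end UniquePaths

end Phylo

open Phylo in
/-- If three distinct leaves `x`, `y`, `z` of a network are each
reachable from the root by a unique directed path, then exactly one of the triplets
`xy|z`, `xz|y`, `yz|x` is consistent with the network. -/
theorem stmt18 {V : Type*} [Fintype V] (R : V → V → Prop) (hnet : IsPhyloNet R)
    (r : V) (hr : inDeg R r = 0) (x y z : V)
    (hx : IsLf R x) (hy : IsLf R y) (hz : IsLf R z)
    (hxy : x ≠ y) (hxz : x ≠ z) (hyz : y ≠ z)
    (hux : ∀ p q : List V, IsPth R p r x → IsPth R q r x → p = q)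
    (huy : ∀ p q : List V, IsPth R p r y → IsPth R q r y → p = q)
    (huz : ∀ p q : List V, IsPth R p r z → IsPth R q r z → p = q) :
    (ConsistentTrip R x y z ∧ ¬ ConsistentTrip R x z y ∧ ¬ ConsistentTrip R y z x) ∨
    (¬ ConsistentTrip R x y z ∧ ConsistentTrip R x z y ∧ ¬ ConsistentTrip R y z x) ∨
    (¬ ConsistentTrip R x y z ∧ ¬ ConsistentTrip R x z y ∧ ConsistentTrip R y z x) := by
  obtain ⟨Px, hPx⟩ := exists_isUniquePth_of_inDeg_eq_zero hnet hr hux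
  obtain ⟨Py, hPy⟩ := exists_isUniquePth_of_inDeg_eq_zero hnet hr huy
  obtain ⟨Pz, hPz⟩ := exists_isUniquePth_of_inDeg_eq_zero hnet hr huz
  have hne := commonPrefixLength_ne_of_eq hnet hx hy hz hxy hxz hPx.1 hPy.1 hPz.1
  have := min_le_commonPrefixLength Px Py Pz
  have := min_le_commonPrefixLength Py Px Pz
  have := min_le_commonPrefixLength Px Pz Py
  have := commonPrefixLength_comm Py Px
  have := commonPrefixLength_comm Pz Px
  have := commonPrefixLength_comm Pz Py
  rcases (by omega : commonPrefixLength Px Pz = commonPrefixLength Py Pz ∧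
      commonPrefixLength Px Pz < commonPrefixLength Px Py ∨
    commonPrefixLength Px Py = commonPrefixLength Py Pz ∧
      commonPrefixLength Px Py < commonPrefixLength Px Pz ∨
    commonPrefixLength Px Py = commonPrefixLength Px Pz ∧
      commonPrefixLength Px Py < commonPrefixLength Py Pz) with h | h | h
  · exact .inl (consistentTrip_resolved_of_commonPrefixLength_lt hnet hr hx hy hxy hPx hPy hPz
      h.1 h.2)
  · obtain ⟨hxzy, hxyz, hzyx⟩ := consistentTrip_resolved_of_commonPrefixLength_lt hnet hr hx hz
      hxz hPx hPz hPy (by omega) (by omega)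
    exact .inr (.inl ⟨hxyz, hxzy, mt consistentTrip_comm.mp hzyx⟩)
  · obtain ⟨hyzx, hyxz, hzxy⟩ := consistentTrip_resolved_of_commonPrefixLength_lt hnet hr hy hz
      hyz hPy hPz hPx (by omega) (by omega)
    exact .inr (.inr ⟨mt consistentTrip_comm.mp hyxz, mt consistentTrip_comm.mp hzxy, hyzx⟩)
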